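/- Let A and B be Banach algebras with contractive approximate units and let E be a nondegenerate Banach A-B-bimodule. Then M(E) is an essential multiplier extension of E: for every multiplier m = (R,L) ∈ M(E) and all a ∈ A, b ∈ B one has a·m = ι(R(a)) and m·b = ι(L(b)); in particular the sets {a·m : a ∈ A, m ∈ M(E)} and {m·b : m ∈ M(E), b ∈ B} are both contained in ι(E), with closed linear spans equal to ι(E); and M(E) is essential, i.e. if m ∈ M(E) satisfies a·m = 0 for all a ∈ A, then m = 0. -/
import Mathlib


/-!
STATEMENT 8: For a nondegenerate Banach `A`-`B`-bimodule `E`, the multiplier bimodule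
`M(E)` is an essential multiplier extension of `E`: `a·m = ι(R(a))`, `m·b = ι(L(b))` for
every multiplier `m = (R,L)`, the sets `{a·m}` and `{m·b}` lie in `ι(E)` and have closed
linear span equal to `ι(E)`, and `M(E)` is essential.

Bimodule actions are encoded as continuous bilinear maps `lE a ξ = a·ξ`,
`rE b ξ = ξ·b`.  Multipliers are pairs `(R,L)` of bounded linear maps with
`a·L(b) = R(a)·b`, inside `(A →L[ℂ] E) × (B →L[ℂ] E)` (whose product norm is
`max (‖R‖, ‖L‖)`), with actions `a·(R,L) = (a₀ ↦ R(a₀a), b₀ ↦ a·L(b₀))` and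
`(R,L)·b = (a₀ ↦ R(a₀)·b, b₀ ↦ L(b·b₀))`, and `ι(ξ) = (a ↦ a·ξ, b ↦ ξ·b)`.
-/

open Filter

namespace Stmt8

universe u v w

/-- `A` has a contractive (two-sided) approximate unit. -/
def HasCAI (A : Type u) [NonUnitalNormedRing A] : Prop :=
  ∃ (ι : Type u) (l : Filter ι) (e : ι → A), l.NeBot ∧ (∀ i, ‖e i‖ ≤ 1) ∧
    ∀ a : A, Tendsto (fun i => ‖e i * a - a‖) l (nhds 0) ∧
      Tendsto (fun i => ‖a * e i - a‖) l (nhds 0)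

variable {A : Type u} {B : Type v} {E : Type w}
variable [NonUnitalNormedRing A] [NormedSpace ℂ A] [IsScalarTower ℂ A A] [SMulCommClass ℂ A A]
variable [NonUnitalNormedRing B] [NormedSpace ℂ B] [IsScalarTower ℂ B B] [SMulCommClass ℂ B B]
variable [NormedAddCommGroup E] [NormedSpace ℂ E] [CompleteSpace E]
variable (lE : A →L[ℂ] E →L[ℂ] E) (rE : B →L[ℂ] E →L[ℂ] E)

/-- `(lE, rE)` makes `E` a Banach `A`-`B`-bimodule. -/
structure IsBanachBimodule : Prop where
  lsmul_mul : ∀ a a' ξ, lE (a * a') ξ = lE a (lE a' ξ)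
  rsmul_mul : ∀ b b' ξ, rE (b * b') ξ = rE b' (rE b ξ)
  smul_comm : ∀ a b ξ, rE b (lE a ξ) = lE a (rE b ξ)
  norm_lsmul : ∀ a ξ, ‖lE a ξ‖ ≤ ‖a‖ * ‖ξ‖
  norm_rsmul : ∀ b ξ, ‖rE b ξ‖ ≤ ‖b‖ * ‖ξ‖

/-- The bimodule `E` is nondegenerate. -/
def NondegenerateBimodule : Prop :=
  closure (↑(Submodule.span ℂ {y : E | ∃ a ξ, lE a ξ = y}) : Set E) = Set.univ ∧
    closure (↑(Submodule.span ℂ {y : E | ∃ b ξ, rE b ξ = y}) : Set E) = Set.univ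

/-- A multiplier of `E`: a pair `(R, L)` with `a·L(b) = R(a)·b`. -/
def IsMultiplier (p : (A →L[ℂ] E) × (B →L[ℂ] E)) : Prop :=
  ∀ a b, lE a (p.2 b) = rE b (p.1 a)

/-- The canonical map `ι : E → M(E)`. -/
noncomputable def iota (ξ : E) : (A →L[ℂ] E) × (B →L[ℂ] E) := (lE.flip ξ, rE.flip ξ)

/-- The left action of `A` on multipliers. -/
noncomputable def aAct (a : A) (p : (A →L[ℂ] E) × (B →L[ℂ] E)) :
    (A →L[ℂ] E) × (B →L[ℂ] E) :=
  (p.1.comp ((ContinuousLinearMap.mul ℂ A).flip a), (lE a).comp p.2)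

/-- The right action of `B` on multipliers. -/
noncomputable def bAct (p : (A →L[ℂ] E) × (B →L[ℂ] E)) (b : B) :
    (A →L[ℂ] E) × (B →L[ℂ] E) :=
  ((rE b).comp p.1, p.2.comp (ContinuousLinearMap.mul ℂ B b))


lemma approx_aux (f : A →L[ℂ] E →L[ℂ] E)
    (hnorm : ∀ a ξ, ‖f a ξ‖ ≤ ‖a‖ * ‖ξ‖)
    (hgen : closure (↑(Submodule.span ℂ {y : E | ∃ a ξ, f a ξ = y}) : Set E) = Set.univ)
    {κ : Type*} {l : Filter κ} [l.NeBot] (e : κ → A) (hbd : ∀ i, ‖e i‖ ≤ 1)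
    (hconv : ∀ (a : A) (ξ : E), Tendsto (fun i => f (e i) (f a ξ)) l (nhds (f a ξ))) :
    ∀ ξ : E, Tendsto (fun i => f (e i) ξ) l (nhds ξ) := by
  set S : Set E := {ξ | Tendsto (fun i => f (e i) ξ) l (nhds ξ)} with hS
  have hsub : (↑(Submodule.span ℂ {y : E | ∃ a ξ, f a ξ = y}) : Set E) ⊆ S := by
    intro x hx
    induction hx using Submodule.span_induction with
    | mem x h => obtain ⟨a, ξ, rfl⟩ := h; exact hconv a ξ
    | zero => simpa [S] using (tendsto_const_nhds : Tendsto (fun _ : κ => (0:E)) l _)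
    | add x y hx hy px py =>
        show Tendsto _ _ _
        simpa [map_add] using px.add py
    | smul c x hx px =>
        show Tendsto _ _ _
        simpa [map_smul] using px.const_smul c
  have hclosed : IsClosed S := by
    rw [← closure_subset_iff_isClosed]
    intro ξ hξ
    rw [hS, Set.mem_setOf_eq, Metric.tendsto_nhds]
    intro ε hε
    obtain ⟨η, hηS, hdist⟩ := Metric.mem_closure_iff.1 hξ (ε/3) (by positivity)
    have hη := Metric.tendsto_nhds.1 hηS (ε/3) (by positivity)
    filter_upwards [hη] with i hi
    have h1 : dist (f (e i) ξ) (f (e i) η) ≤ dist ξ η := by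
      rw [dist_eq_norm, dist_eq_norm, ← map_sub]
      calc ‖f (e i) (ξ - η)‖ ≤ ‖e i‖ * ‖ξ - η‖ := hnorm _ _
        _ ≤ 1 * ‖ξ - η‖ := by gcongr; exact hbd i
        _ = ‖ξ - η‖ := one_mul _
    calc dist (f (e i) ξ) ξ ≤ dist (f (e i) ξ) (f (e i) η) + dist (f (e i) η) η + dist η ξ :=
          dist_triangle4 _ _ _ _
      _ ≤ dist ξ η + dist (f (e i) η) η + dist η ξ := by gcongr
      _ < ε/3 + ε/3 + ε/3 := by rw [dist_comm η ξ]; gcongr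
      _ = ε := by ring
  have : Set.univ ⊆ S := by
    rw [← hgen]; exact closure_minimal hsub hclosed
  exact fun ξ => this (Set.mem_univ ξ)

lemma left_approx (hA : HasCAI A) (hbim : IsBanachBimodule lE rE)
    (hnd1 : closure (↑(Submodule.span ℂ {y : E | ∃ a ξ, lE a ξ = y}) : Set E) = Set.univ) :
    ∃ (κ : Type u) (l : Filter κ) (e : κ → A), l.NeBot ∧ (∀ i, ‖e i‖ ≤ 1) ∧
      ∀ ξ : E, Tendsto (fun i => lE (e i) ξ) l (nhds ξ) := by
  obtain ⟨κ, l, e, hne, hbd, hconv⟩ := hA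
  haveI := hne
  refine ⟨κ, l, e, hne, hbd, ?_⟩
  apply approx_aux lE hbim.norm_lsmul hnd1 e hbd
  intro a ξ
  rw [tendsto_iff_norm_sub_tendsto_zero]
  have key : ∀ i, ‖lE (e i) (lE a ξ) - lE a ξ‖ ≤ ‖e i * a - a‖ * ‖ξ‖ := by
    intro i
    rw [← hbim.lsmul_mul]
    calc ‖lE (e i * a) ξ - lE a ξ‖ = ‖lE (e i * a - a) ξ‖ := by
          rw [map_sub, ContinuousLinearMap.sub_apply]
      _ ≤ ‖e i * a - a‖ * ‖ξ‖ := hbim.norm_lsmul _ _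
  have h0 : Tendsto (fun i => ‖e i * a - a‖ * ‖ξ‖) l (nhds 0) := by
    simpa using ((hconv a).1).mul_const ‖ξ‖
  exact squeeze_zero (fun i => norm_nonneg _) key h0

lemma right_approx (hB : HasCAI B) (hbim : IsBanachBimodule lE rE)
    (hnd2 : closure (↑(Submodule.span ℂ {y : E | ∃ b ξ, rE b ξ = y}) : Set E) = Set.univ) :
    ∃ (κ : Type v) (l : Filter κ) (e : κ → B), l.NeBot ∧ (∀ i, ‖e i‖ ≤ 1) ∧
      ∀ ξ : E, Tendsto (fun i => rE (e i) ξ) l (nhds ξ) := by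
  obtain ⟨κ, l, e, hne, hbd, hconv⟩ := hB
  haveI := hne
  refine ⟨κ, l, e, hne, hbd, ?_⟩
  apply approx_aux rE hbim.norm_rsmul hnd2 e hbd
  intro b ξ
  rw [tendsto_iff_norm_sub_tendsto_zero]
  have key : ∀ i, ‖rE (e i) (rE b ξ) - rE b ξ‖ ≤ ‖b * e i - b‖ * ‖ξ‖ := by
    intro i
    rw [← hbim.rsmul_mul]
    calc ‖rE (b * e i) ξ - rE b ξ‖ = ‖rE (b * e i - b) ξ‖ := by
          rw [map_sub, ContinuousLinearMap.sub_apply]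
      _ ≤ ‖b * e i - b‖ * ‖ξ‖ := hbim.norm_rsmul _ _
  have h0 : Tendsto (fun i => ‖b * e i - b‖ * ‖ξ‖) l (nhds 0) := by
    simpa using ((hconv b).2).mul_const ‖ξ‖
  exact squeeze_zero (fun i => norm_nonneg _) key h0

/-- **`M(E)` is an essential multiplier extension of `E`.** -/
theorem multiplier_bimodule_essential_extension
    (hA : HasCAI A) (hB : HasCAI B)
    (hbim : IsBanachBimodule lE rE) (hnd : NondegenerateBimodule lE rE) :
    -- `a·m = ι(R(a))` and `m·b = ι(L(b))`
    (∀ m : (A →L[ℂ] E) × (B →L[ℂ] E), IsMultiplier lE rE m →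
      (∀ a : A, aAct lE a m = iota lE rE (m.1 a)) ∧
        ∀ b : B, bAct rE m b = iota lE rE (m.2 b)) ∧
    -- `{a·m} ⊆ ι(E)` with closed linear span `ι(E)`
    ({p | ∃ (a : A) (m : (A →L[ℂ] E) × (B →L[ℂ] E)), IsMultiplier lE rE m ∧ aAct lE a m = p}
        ⊆ Set.range (iota lE rE)) ∧
    (closure (↑(Submodule.span ℂ
        {p | ∃ (a : A) (m : (A →L[ℂ] E) × (B →L[ℂ] E)), IsMultiplier lE rE m ∧ aAct lE a m = p})
        : Set ((A →L[ℂ] E) × (B →L[ℂ] E))) = Set.range (iota lE rE)) ∧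
    -- `{m·b} ⊆ ι(E)` with closed linear span `ι(E)`
    ({p | ∃ (b : B) (m : (A →L[ℂ] E) × (B →L[ℂ] E)), IsMultiplier lE rE m ∧ bAct rE m b = p}
        ⊆ Set.range (iota lE rE)) ∧
    (closure (↑(Submodule.span ℂ
        {p | ∃ (b : B) (m : (A →L[ℂ] E) × (B →L[ℂ] E)), IsMultiplier lE rE m ∧ bAct rE m b = p})
        : Set ((A →L[ℂ] E) × (B →L[ℂ] E))) = Set.range (iota lE rE)) ∧
    -- `M(E)` is essential
    (∀ m : (A →L[ℂ] E) × (B →L[ℂ] E), IsMultiplier lE rE m →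
      (∀ a : A, aAct lE a m = 0) → m = 0) := by
  obtain ⟨κA, lA, eA, hneA, hbdA, happA⟩ := left_approx lE rE hA hbim hnd.1
  obtain ⟨κB, lB, eB, hneB, hbdB, happB⟩ := right_approx lE rE hB hbim hnd.2
  haveI := hneA; haveI := hneB
  have hL0 : ∀ z : E, (∀ a, lE a z = 0) → z = 0 := by
    intro z hz
    refine tendsto_nhds_unique ?_ (tendsto_const_nhds : Tendsto (fun _ : κA => (0:E)) lA _)
    simpa [hz] using happA z
  have hR0 : ∀ z : E, (∀ b, rE b z = 0) → z = 0 := by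
    intro z hz
    refine tendsto_nhds_unique ?_ (tendsto_const_nhds : Tendsto (fun _ : κB => (0:E)) lB _)
    simpa [hz] using happB z
  have part1 : ∀ m : (A →L[ℂ] E) × (B →L[ℂ] E), IsMultiplier lE rE m →
      (∀ a : A, aAct lE a m = iota lE rE (m.1 a)) ∧
        ∀ b : B, bAct rE m b = iota lE rE (m.2 b) := by
    intro m hm
    constructor
    · intro a
      refine Prod.ext ?_ ?_
      · ext a₀
        show m.1 (a₀ * a) = lE a₀ (m.1 a)
        refine sub_eq_zero.1 (hR0 _ fun b => ?_)
        rw [map_sub]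
        have h1 : rE b (m.1 (a₀ * a)) = rE b (lE a₀ (m.1 a)) := by
          rw [← hm (a₀ * a) b, hbim.lsmul_mul, hm a b, hbim.smul_comm]
        rw [h1, sub_self]
      · ext b
        exact hm a b
    · intro b
      refine Prod.ext ?_ ?_
      · ext a
        exact (hm a b).symm
      · ext b₀
        show m.2 (b * b₀) = rE b₀ (m.2 b)
        refine sub_eq_zero.1 (hL0 _ fun a => ?_)
        rw [map_sub]
        have h1 : lE a (m.2 (b * b₀)) = lE a (rE b₀ (m.2 b)) := by
          rw [hm a (b * b₀), hbim.rsmul_mul, ← hm a b, hbim.smul_comm]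
        rw [h1, sub_self]
  have sub1 : {p | ∃ (a : A) (m : (A →L[ℂ] E) × (B →L[ℂ] E)),
      IsMultiplier lE rE m ∧ aAct lE a m = p} ⊆ Set.range (iota lE rE) := by
    rintro p ⟨a, m, hm, rfl⟩
    exact ⟨m.1 a, ((part1 m hm).1 a).symm⟩
  have sub2 : {p | ∃ (b : B) (m : (A →L[ℂ] E) × (B →L[ℂ] E)),
      IsMultiplier lE rE m ∧ bAct rE m b = p} ⊆ Set.range (iota lE rE) := by
    rintro p ⟨b, m, hm, rfl⟩
    exact ⟨m.2 b, ((part1 m hm).2 b).symm⟩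
  set ι' : E →L[ℂ] (A →L[ℂ] E) × (B →L[ℂ] E) := lE.flip.prod rE.flip with hι'
  have hι'app : ∀ ξ, ι' ξ = iota lE rE ξ := fun ξ => rfl
  have hub : ∀ ξ, ‖ι' ξ‖ ≤ ‖ξ‖ := by
    intro ξ
    rw [Prod.norm_def]
    refine max_le ?_ ?_
    · exact ContinuousLinearMap.opNorm_le_bound _ (norm_nonneg ξ)
        fun a => by rw [mul_comm]; exact hbim.norm_lsmul a ξ
    · exact ContinuousLinearMap.opNorm_le_bound _ (norm_nonneg ξ)
        fun b => by rw [mul_comm]; exact hbim.norm_rsmul b ξ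
  have hlb : ∀ ξ, ‖ξ‖ ≤ ‖ι' ξ‖ := by
    intro ξ
    have h1 : Tendsto (fun i => ‖lE (eA i) ξ‖) lA (nhds ‖ξ‖) :=
      (continuous_norm.tendsto ξ).comp (happA ξ)
    refine le_of_tendsto h1 (Eventually.of_forall fun i => ?_)
    calc ‖lE (eA i) ξ‖ = ‖lE.flip ξ (eA i)‖ := rfl
      _ ≤ ‖lE.flip ξ‖ * ‖eA i‖ := (lE.flip ξ).le_opNorm _
      _ ≤ ‖lE.flip ξ‖ * 1 := mul_le_mul_of_nonneg_left (hbdA i) (norm_nonneg _)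
      _ = ‖lE.flip ξ‖ := mul_one _
      _ ≤ ‖ι' ξ‖ := norm_fst_le (ι' ξ)
  have hiso : Isometry ι' :=
    AddMonoidHomClass.isometry_of_norm ι' fun ξ => le_antisymm (hub ξ) (hlb ξ)
  have hrange_eq : Set.range (iota lE rE) = Set.range ι' := by
    ext p; constructor
    · rintro ⟨ξ, rfl⟩; exact ⟨ξ, hι'app ξ⟩
    · rintro ⟨ξ, rfl⟩; exact ⟨ξ, (hι'app ξ).symm⟩
  have hclosedrange : IsClosed (Set.range (iota lE rE)) := by
    rw [hrange_eq]
    exact hiso.isClosedEmbedding.isClosed_range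
  have hspan_range : ∀ (S : Set ((A →L[ℂ] E) × (B →L[ℂ] E))),
      S ⊆ Set.range (iota lE rE) →
      (↑(Submodule.span ℂ S) : Set ((A →L[ℂ] E) × (B →L[ℂ] E))) ⊆ Set.range (iota lE rE) := by
    intro S hS x hx
    have hle : Submodule.span ℂ S ≤ LinearMap.range (ι' : E →ₗ[ℂ] _) := by
      rw [Submodule.span_le]
      intro p hp
      obtain ⟨ξ, hξ⟩ := hS hp
      exact ⟨ξ, hξ⟩
    obtain ⟨ξ, hξ⟩ := hle hx
    exact ⟨ξ, hξ⟩
  refine ⟨part1, sub1, ?_, sub2, ?_, ?_⟩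
  · refine le_antisymm (closure_minimal (hspan_range _ sub1) hclosedrange) ?_
    rintro _ ⟨ξ, rfl⟩
    have hξ : ξ ∈ closure (↑(Submodule.span ℂ {y : E | ∃ a ζ, lE a ζ = y}) : Set E) := by
      rw [hnd.1]; trivial
    have hmaps : Set.MapsTo (⇑ι')
        (↑(Submodule.span ℂ {y : E | ∃ a ζ, lE a ζ = y}))
        (↑(Submodule.span ℂ {p | ∃ (a : A) (m : (A →L[ℂ] E) × (B →L[ℂ] E)),
          IsMultiplier lE rE m ∧ aAct lE a m = p})) := by
      intro x hx
      induction hx using Submodule.span_induction with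
      | mem y hy =>
          obtain ⟨a, ζ, rfl⟩ := hy
          have hmul : IsMultiplier lE rE (iota lE rE ζ) := fun a' b =>
            (hbim.smul_comm a' b ζ).symm
          exact Submodule.subset_span ⟨a, iota lE rE ζ, hmul, (part1 _ hmul).1 a⟩
      | zero => simpa using Submodule.zero_mem _
      | add x y hx hy px py =>
          show ι' (x + y) ∈ _
          rw [map_add]; exact Submodule.add_mem _ px py
      | smul c x hx px =>
          show ι' (c • x) ∈ _
          rw [map_smul]; exact Submodule.smul_mem _ c px
    have := map_mem_closure ι'.continuous hξ hmaps
    rwa [hι'app] at this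
  · refine le_antisymm (closure_minimal (hspan_range _ sub2) hclosedrange) ?_
    rintro _ ⟨ξ, rfl⟩
    have hξ : ξ ∈ closure (↑(Submodule.span ℂ {y : E | ∃ b ζ, rE b ζ = y}) : Set E) := by
      rw [hnd.2]; trivial
    have hmaps : Set.MapsTo (⇑ι')
        (↑(Submodule.span ℂ {y : E | ∃ b ζ, rE b ζ = y}))
        (↑(Submodule.span ℂ {p | ∃ (b : B) (m : (A →L[ℂ] E) × (B →L[ℂ] E)),
          IsMultiplier lE rE m ∧ bAct rE m b = p})) := by
      intro x hx
      induction hx using Submodule.span_induction with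
      | mem y hy =>
          obtain ⟨b, ζ, rfl⟩ := hy
          have hmul : IsMultiplier lE rE (iota lE rE ζ) := fun a' b' =>
            (hbim.smul_comm a' b' ζ).symm
          exact Submodule.subset_span ⟨b, iota lE rE ζ, hmul, (part1 _ hmul).2 b⟩
      | zero => simpa using Submodule.zero_mem _
      | add x y hx hy px py =>
          show ι' (x + y) ∈ _
          rw [map_add]; exact Submodule.add_mem _ px py
      | smul c x hx px =>
          show ι' (c • x) ∈ _
          rw [map_smul]; exact Submodule.smul_mem _ c px
    have := map_mem_closure ι'.continuous hξ hmaps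
    rwa [hι'app] at this
  · intro m hm h0
    have hm1 : m.1 = 0 := by
      ext a
      have h := (part1 m hm).1 a
      rw [h0 a] at h
      have h2 : ∀ b, rE b (m.1 a) = 0 := by
        intro b
        have h3 := ContinuousLinearMap.ext_iff.1 (congrArg Prod.snd h).symm b
        simpa [iota] using h3
      simpa using hR0 _ h2
    have hm2 : m.2 = 0 := by
      ext b
      have h2 : ∀ a, lE a (m.2 b) = 0 := by
        intro a
        have h3 := ContinuousLinearMap.ext_iff.1 (congrArg Prod.snd (h0 a)) b
        simpa [aAct] using h3
      simpa using hL0 _ h2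
    exact Prod.ext hm1 hm2

end Stmt8
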